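/- Let d ≥ 1, let p be an admissible triple of exponents, and let η ∈ (0,1). Then for every ε > 0 there exists δ > 0 such that for all f1 ∈ L^{p_1}(ℝ^{2d+1}), f2 ∈ L^{p_2}(ℝ^{2d+1}) with ‖f1‖_{p_1} ≤ δ and ‖f2‖_{p_2} ≤ δ, and every 2d×2d real matrix A with ‖AᵀJA‖ ≤ δ, one has |T'(f_{1,♯}, f_{2,♯}, g3)| ≤ ε (‖f1‖_{p_1}² + ‖f2‖_{p_2}² + ‖AᵀJA‖²), where f_{j,♯} is formed with parameter η. -/

import Mathlib

open MeasureTheory Filter Matrix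
open scoped Real ENNReal BigOperators InnerProductSpace

noncomputable section

namespace Stability

/-- Euclidean space `ℝ^n`. -/
abbrev E (n : ℕ) : Type := EuclideanSpace ℝ (Fin n)

/-- The underlying space `ℝ^{2d} × ℝ` of the Heisenberg group `ℍ^d`. -/
abbrev H (d : ℕ) : Type := E (2 * d) × ℝ

/-- A triple of exponents `p ∈ (1,∞)^3` is admissible if `∑ 1/p_j = 2`. -/
def IsAdmissible (p : Fin 3 → ℝ) : Prop :=
  (∀ j, 1 < p j) ∧ (∑ j, (p j)⁻¹) = 2

/-- Conjugate exponent `p' = p/(p-1)`. -/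
def conjExp (q : ℝ) : ℝ := q / (q - 1)

/-- The sharp Young constant `A_p`. -/
def youngA (p : Fin 3 → ℝ) : ℝ :=
  ∏ j, (p j) ^ (1 / (2 * p j)) / (conjExp (p j)) ^ (1 / (2 * conjExp (p j)))

/-- `γ_j = π p_j'`. -/
def γexp (p : Fin 3 → ℝ) (j : Fin 3) : ℝ := Real.pi * conjExp (p j)

/-- The `L^q` norm (for a real exponent `q`) of a complex-valued function. -/
def Lnorm {α : Type*} [MeasureSpace α] (q : ℝ) (f : α → ℂ) : ℝ :=
  (∫ z, ‖f z‖ ^ q) ^ (1 / q)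

/-- Membership of a triple of functions in `L^p = L^{p_1} × L^{p_2} × L^{p_3}`. -/
def MemLpT {α : Type*} [MeasureSpace α] (p : Fin 3 → ℝ) (f : Fin 3 → α → ℂ) : Prop :=
  ∀ j, MemLp (f j) (ENNReal.ofReal (p j)) volume

/-- Maximum of a triple of reals. -/
def tmax (u : Fin 3 → ℝ) : ℝ := max (u 0) (max (u 1) (u 2))

/-- `‖f‖_p := max_j ‖f_j‖_{p_j}` for a triple of functions. -/
def tnorm {α : Type*} [MeasureSpace α] (p : Fin 3 → ℝ) (f : Fin 3 → α → ℂ) : ℝ :=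
  tmax fun j => Lnorm (p j) (f j)

/-- The real Gaussian `exp(-γ_j |z|²)` on `ℝ^n`. -/
def gaussER (n : ℕ) (p : Fin 3 → ℝ) (j : Fin 3) : E n → ℝ :=
  fun z => Real.exp (-(γexp p j * ‖z‖ ^ 2))

/-- The Gaussian `g_j(z) = exp(-γ_j |z|²)` on `ℝ^n`, as a complex-valued function. -/
def gaussE (n : ℕ) (p : Fin 3 → ℝ) (j : Fin 3) : E n → ℂ :=
  fun z => Complex.ofReal (gaussER n p j z)

/-- The trilinear form for convolution on `ℝ^n`. -/
def Tconv (n : ℕ) (f : Fin 3 → E n → ℂ) : ℂ :=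
  ∫ x : E n, ∫ y : E n, f 0 x * f 1 y * f 2 (-x - y)

/-- Action of a matrix on `ℝ^n`. -/
def mapp {n : ℕ} (M : Matrix (Fin n) (Fin n) ℝ) (x : E n) : E n :=
  Matrix.toEuclideanLin M x

/-- The (Euclidean) operator norm of a matrix. -/
def opNorm {n : ℕ} (M : Matrix (Fin n) (Fin n) ℝ) : ℝ :=
  ‖LinearMap.toContinuousLinearMap (Matrix.toEuclideanLin M)‖

/-- The standard symplectic form `σ(x,y) = ∑_{j<d} (x_j y_{j+d} - x_{j+d} y_j)` on `ℝ^{2d}`. -/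
def symp (d : ℕ) (x y : E (2 * d)) : ℝ :=
  ∑ j : Fin d, (x ⟨j.1, by have := j.2; omega⟩ * y ⟨j.1 + d, by have := j.2; omega⟩
    - x ⟨j.1 + d, by have := j.2; omega⟩ * y ⟨j.1, by have := j.2; omega⟩)

/-- The matrix `J` with `σ(x,y) = x ⬝ (J y)`. -/
def Jmat (d : ℕ) : Matrix (Fin (2 * d)) (Fin (2 * d)) ℝ :=
  Matrix.of fun i k =>
    if i.1 < d ∧ k.1 = i.1 + d then 1 else if k.1 + d = i.1 then -1 else 0

/-- A symplectic matrix. -/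
def IsSymplectic (d : ℕ) (S : Matrix (Fin (2 * d)) (Fin (2 * d)) ℝ) : Prop :=
  ∀ x y : E (2 * d), symp d (mapp S x) (mapp S y) = symp d x y

/-- The Heisenberg group law `(x,t)·(x',t') = (x+x', t+t'+σ(x,x'))`. -/
def hMul (d : ℕ) (z w : H d) : H d := (z.1 + w.1, z.2 + w.2 + symp d z.1 w.1)

/-- Inversion `(x,t)⁻¹ = (-x,-t)` in the Heisenberg group. -/
def hInv (d : ℕ) (z : H d) : H d := (-z.1, -z.2)

/-- The trilinear form for convolution on the Heisenberg group `ℍ^d`. -/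
def THeis (d : ℕ) (f : Fin 3 → H d → ℂ) : ℂ :=
  ∫ z1 : H d, ∫ z2 : H d, f 0 z1 * f 1 z2 * f 2 (hMul d (hInv d z2) (hInv d z1))

/-- The generators of the symmetry group `Σ(T_{ℍ^d})`: scalings, dilations, translations,
the diagonal action of the symplectic group, shear transformations, and modulations in `x`.
Each family of generators is closed under inversion, so the closure of this set under
composition is exactly the group generated by these symmetries. -/
def heisGens (d : ℕ) : Set (Function.End (Fin 3 → H d → ℂ)) :=
  {Ψ | (∃ a : Fin 3 → ℂ, (∀ j, a j ≠ 0) ∧ Ψ = fun f j z => a j * f j z) ∨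
       (∃ r : ℝ, 0 < r ∧ Ψ = fun f j z => f j (r • z.1, r ^ 2 * z.2)) ∨
       (∃ u : Fin 3 → H d, Ψ = fun f j z => f j (hMul d (hMul d (u j) z) (hInv d (u (j + 1))))) ∨
       (∃ S, IsSymplectic d S ∧ Ψ = fun f j z => f j (mapp S z.1, z.2)) ∨
       (∃ φ : E (2 * d) →ₗ[ℝ] ℝ, Ψ = fun f j z => f j (z.1, z.2 + φ z.1)) ∨
       (∃ u : E (2 * d), Ψ = fun f j z => Complex.exp (Complex.I * Complex.ofReal ⟪u, z.1⟫_ℝ) * f j z)}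

/-- The symmetry group `Σ(T_{ℍ^d})` (as a monoid of transformations; since the generating
set is closed under inversion this coincides with the generated group). -/
def heisSym (d : ℕ) : Submonoid (Function.End (Fin 3 → H d → ℂ)) :=
  Submonoid.closure (heisGens d)

/-- The canonical Gaussian `G(x,t) = exp(-|Lx|² - a t² + i b t)` on `ℍ^d`. -/
def canonGauss (d : ℕ) (L : Matrix (Fin (2 * d)) (Fin (2 * d)) ℝ) (a b : ℝ) : H d → ℂ :=
  fun z => Complex.exp (Complex.ofReal (-(‖mapp L z.1‖ ^ 2) - a * z.2 ^ 2) +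
    Complex.I * Complex.ofReal (b * z.2))

/-- The parameters `(L,a,b)` define a canonical `ε`-diffuse Gaussian. -/
def IsCanonDiffuse (d : ℕ) (ε : ℝ) (L : Matrix (Fin (2 * d)) (Fin (2 * d)) ℝ)
    (a b : ℝ) : Prop :=
  0 < a ∧ IsUnit L.det ∧ max (max a (Real.sqrt a)) b * opNorm L⁻¹ < ε

/-- `G` is an `ε`-diffuse, `p`-compatible ordered triple of Gaussians: `G = Ψ G̃` for a
symmetry `Ψ ∈ Σ(T_{ℍ^d})` and a `p`-compatible triple `G̃` of canonical `ε`-diffuse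
Gaussians, i.e. `G̃_j = exp(-|L_j x|² - a_j t² + i b_j t)` with `L_j = γ_j^{1/2} L`,
`a_j = γ_j a`, `b_j = b`. -/
def IsCompatibleDiffuse (d : ℕ) (p : Fin 3 → ℝ) (ε : ℝ) (G : Fin 3 → H d → ℂ) : Prop :=
  ∃ Ψ ∈ heisSym d, ∃ L : Matrix (Fin (2 * d)) (Fin (2 * d)) ℝ, ∃ a b : ℝ,
    (∀ j, IsCanonDiffuse d ε (Real.sqrt (γexp p j) • L) (γexp p j * a) b) ∧
    G = Ψ (fun j => canonGauss d (Real.sqrt (γexp p j) • L) (γexp p j * a) b)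

/-- The real Gaussian `exp(-γ_j(|x|²+t²))` on `ℝ^{2d} × ℝ`. -/
def gaussHR (d : ℕ) (p : Fin 3 → ℝ) (j : Fin 3) : H d → ℝ :=
  fun z => Real.exp (-(γexp p j * (‖z.1‖ ^ 2 + z.2 ^ 2)))

/-- The Gaussian `g_j(x,t) = exp(-γ_j(|x|²+t²))` on `ℝ^{2d} × ℝ`, complex-valued. -/
def gaussH (d : ℕ) (p : Fin 3 → ℝ) (j : Fin 3) : H d → ℂ :=
  fun z => Complex.ofReal (gaussHR d p j z)

/-- The generalized trilinear form `T(f,A,b)`. -/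
def Tgen (d : ℕ) (f : Fin 3 → H d → ℂ) (A : Matrix (Fin (2 * d)) (Fin (2 * d)) ℝ)
    (b : ℝ) : ℂ :=
  ∫ z1 : H d, ∫ z2 : H d,
    f 0 z1 * f 1 z2 *
      f 2 (-(z1.1 + z2.1), -(z1.2 + z2.2 + symp d (mapp A z1.1) (mapp A z2.1))) *
      Complex.exp (Complex.I * Complex.ofReal (b * symp d (mapp A z1.1) (mapp A z2.1)))

/-- The group law `(x,t)·_A(x',t') = (x+x', t+t'+σ(Ax,Ax'))`. -/
def hMulA (d : ℕ) (A : Matrix (Fin (2 * d)) (Fin (2 * d)) ℝ) (z w : H d) : H d :=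
  (z.1 + w.1, z.2 + w.2 + symp d (mapp A z.1) (mapp A w.1))

/-- The state space on which the symmetries of `T(f,A,b)` act: a triple of functions
together with the attached parameters `(A,b)`. -/
abbrev X (d : ℕ) : Type :=
  (Fin 3 → H d → ℂ) × Matrix (Fin (2 * d)) (Fin (2 * d)) ℝ × ℝ

/-- The generators of `𝔊₀`: the diagonal `GL(2d)` action and modulation in the last
coordinate. Each family is closed under inversion. -/
def G0gens (d : ℕ) : Set (Function.End (X d)) :=
  {Ψ | (∃ L : Matrix (Fin (2 * d)) (Fin (2 * d)) ℝ, IsUnit L.det ∧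
          Ψ = fun s => (fun j z => s.1 j (mapp L z.1, z.2), s.2.1 * L, s.2.2)) ∨
       (∃ ξ : ℝ,
          Ψ = fun s => (fun j z => Complex.exp (Complex.I * Complex.ofReal (ξ * z.2)) * s.1 j z,
            s.2.1, s.2.2 + ξ))}

/-- The group `𝔊₀` (as a monoid of transformations; the generating set is closed under
inversion so this coincides with the generated group). -/
def G0 (d : ℕ) : Submonoid (Function.End (X d)) := Submonoid.closure (G0gens d)

/-- The generators of `𝔊₁`: scalings, dilations, translation–modulation symmetries,
the diagonal symplectic action, shears, and modulations in `x`. -/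
def G1gens (d : ℕ) : Set (Function.End (X d)) :=
  {Ψ | (∃ a : Fin 3 → ℂ, (∀ j, a j ≠ 0) ∧
          Ψ = fun s => (fun j z => a j * s.1 j z, s.2.1, s.2.2)) ∨
       (∃ r : ℝ, 0 < r ∧
          Ψ = fun s => (fun j z => s.1 j (r • z.1, r ^ 2 * z.2), s.2.1, r ^ 2 * s.2.2)) ∨
       (∃ U : Fin 3 → H d,
          Ψ = fun s => (fun j z =>
            (if j = 0 then
                Complex.exp (Complex.I * Complex.ofReal
                  ⟪(-(s.2.2)) • mapp ((s.2.1)ᵀ * Jmat d * s.2.1) ((U 1).1 - (U 2).1), z.1⟫_ℝ)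
             else if j = 1 then
                Complex.exp (Complex.I * Complex.ofReal
                  ⟪(-(s.2.2)) • mapp (((s.2.1)ᵀ * Jmat d * s.2.1)ᵀ) ((U 0).1 - (U 1).1), z.1⟫_ℝ)
             else 1) *
            s.1 j (hMulA d s.2.1 (hMulA d s.2.1 (U j) z) (hInv d (U (j + 1)))),
           s.2.1, s.2.2)) ∨
       (∃ S, IsSymplectic d S ∧
          Ψ = fun s => (fun j z => s.1 j (mapp S z.1, z.2), s.2.1, s.2.2)) ∨
       (∃ φ : E (2 * d) →ₗ[ℝ] ℝ,
          Ψ = fun s => (fun j z => s.1 j (z.1, z.2 + φ z.1), s.2.1, s.2.2)) ∨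
       (∃ u : E (2 * d),
          Ψ = fun s => (fun j z => Complex.exp (Complex.I * Complex.ofReal ⟪u, z.1⟫_ℝ) * s.1 j z,
            s.2.1, s.2.2))}

/-- The group `𝔊₁` (as a monoid of transformations; the generating set is closed under
inversion so this coincides with the generated group). -/
def G1 (d : ℕ) : Submonoid (Function.End (X d)) := Submonoid.closure (G1gens d)

/-- The orbit `Õ(f,A,b)`: all `Ψ₀ Ψ₁ ((e^{-ibt} f) ∘ A⁻¹, Id, 0)` with `Ψ₀ ∈ 𝔊₀`,
`Ψ₁ ∈ 𝔊₁`. -/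
def tildeO (d : ℕ) (f : Fin 3 → H d → ℂ) (A : Matrix (Fin (2 * d)) (Fin (2 * d)) ℝ)
    (b : ℝ) : Set (X d) :=
  {y | ∃ Ψ₀ ∈ G0 d, ∃ Ψ₁ ∈ G1 d,
    y = Ψ₀ (Ψ₁ (fun j z => Complex.exp (-(Complex.I * Complex.ofReal (b * z.2))) *
          f j (mapp A⁻¹ z.1, z.2), 1, 0))}

/-- The squared distance `dist_p(Õ(f,A,b),(g,0,0))²`. -/
def distSq (d : ℕ) (p : Fin 3 → ℝ) (f : Fin 3 → H d → ℂ)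
    (A : Matrix (Fin (2 * d)) (Fin (2 * d)) ℝ) (b : ℝ) : ℝ :=
  sInf ((fun y => (tmax fun j => Lnorm (p j) (y.1 j - gaussH d p j)) ^ 2
      + opNorm ((y.2.1)ᵀ * Jmat d * y.2.1) ^ 2
      + y.2.2 ^ 2 * opNorm ((y.2.1)ᵀ * Jmat d * y.2.1) ^ 2) '' tildeO d f A b)

/-- The group–structure difference form `T'`. -/
def T'op (d : ℕ) (A : Matrix (Fin (2 * d)) (Fin (2 * d)) ℝ) (h : Fin 3 → H d → ℂ) : ℂ :=
  ∫ z1 : H d, ∫ z2 : H d, h 0 z1 * h 1 z2 *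
    (h 2 (-(z1.1 + z2.1), -(z1.2 + z2.2 + symp d (mapp A z1.1) (mapp A z2.1)))
      - h 2 (-(z1.1 + z2.1), -(z1.2 + z2.2)))

/-- The twisting–factor difference form `T''`. -/
def T''op (d : ℕ) (A : Matrix (Fin (2 * d)) (Fin (2 * d)) ℝ) (b : ℝ)
    (h : Fin 3 → H d → ℂ) : ℂ :=
  ∫ z1 : H d, ∫ z2 : H d, h 0 z1 * h 1 z2 *
    h 2 (-(z1.1 + z2.1), -(z1.2 + z2.2 + symp d (mapp A z1.1) (mapp A z2.1))) *
    (Complex.exp (Complex.I * Complex.ofReal (b * symp d (mapp A z1.1) (mapp A z2.1))) - 1)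

/-- The part `f_♯` of `f`: `f_♯(z) = f(z)` when `|f(z)| ≤ η g(z)`, else `0`. -/
def fSharp {α : Type*} (η : ℝ) (gR : α → ℝ) (f : α → ℂ) : α → ℂ :=
  fun z => if ‖f z‖ ≤ η * gR z then f z else 0

/-- The part `f_♭ = f - f_♯`. -/
def fFlat {α : Type*} (η : ℝ) (gR : α → ℝ) (f : α → ℂ) : α → ℂ :=
  fun z => f z - fSharp η gR f z

/-- The generators of the symmetry group of convolution on `ℝ^n`: scalings, translations
(with `v₁+v₂+v₃ = 0`), common modulations, and the diagonal `GL(n)` action. Each family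
is closed under inversion. -/
def euclGens (n : ℕ) : Set (Function.End (Fin 3 → E n → ℂ)) :=
  {Ψ | (∃ a : Fin 3 → ℂ, (∀ j, a j ≠ 0) ∧ Ψ = fun f j x => a j * f j x) ∨
       (∃ v : Fin 3 → E n, v 0 + v 1 + v 2 = 0 ∧ Ψ = fun f j x => f j (x + v j)) ∨
       (∃ ξ : E n, Ψ = fun f j x => Complex.exp (Complex.I * Complex.ofReal ⟪ξ, x⟫_ℝ) * f j x) ∨
       (∃ L : Matrix (Fin n) (Fin n) ℝ, IsUnit L.det ∧ Ψ = fun f j x => f j (mapp L x))}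

/-- The symmetry group of Euclidean convolution (as a monoid of transformations; the
generating set is closed under inversion so this coincides with the generated group). -/
def euclSym (n : ℕ) : Submonoid (Function.End (Fin 3 → E n → ℂ)) :=
  Submonoid.closure (euclGens n)

/-- The orbit `O(f)` of a triple under the symmetries of Euclidean convolution. -/
def euclOrbit (n : ℕ) (f : Fin 3 → E n → ℂ) : Set (Fin 3 → E n → ℂ) :=
  {h | ∃ Ψ ∈ euclSym n, h = Ψ f}

/-- `dist_p(O(f), g) = inf_{h ∈ O(f)} max_j ‖h_j - g_j‖_{p_j}`. -/
def euclDist (n : ℕ) (p : Fin 3 → ℝ) (f : Fin 3 → E n → ℂ) : ℝ :=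
  sInf ((fun h => tmax fun j => Lnorm (p j) (h j - gaussE n p j)) '' euclOrbit n f)

/-- `P` is the family of normalized orthogonal polynomials `P_n^{(t)}`: for `t > 0`,
`P_n^{(t)}` has degree `n`, positive leading coefficient, `‖P_n^{(t)} e^{-tπx²}‖_{L²} = 1`
and `P_n^{(t)} e^{-tπx²} ⊥ P_k^{(t)} e^{-tπx²}` for `k < n`. -/
def IsHermiteFamily (P : ℝ → ℕ → Polynomial ℝ) : Prop :=
  ∀ t : ℝ, 0 < t → ∀ n : ℕ,
    (P t n).degree = n ∧ 0 < (P t n).leadingCoeff ∧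
    (∫ x : ℝ, ((P t n).eval x) ^ 2 * Real.exp (-(2 * t * Real.pi * x ^ 2))) = 1 ∧
    ∀ k : ℕ, k < n →
      (∫ x : ℝ, (P t n).eval x * (P t k).eval x * Real.exp (-(2 * t * Real.pi * x ^ 2))) = 0

/-- `τ_j = p_j p_j' / 2`. -/
def τexp (p : Fin 3 → ℝ) (j : Fin 3) : ℝ := p j * conjExp (p j) / 2

/-- `⟨Re f_j, P_α^{(τ_j)} g_j^{p_j-1}⟩` on `ℝ^{2d+1}`. -/
def pairReE (d : ℕ) (p : Fin 3 → ℝ) (P : ℝ → ℕ → Polynomial ℝ)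
    (f : Fin 3 → E (2 * d + 1) → ℂ) (j : Fin 3) (α : Fin (2 * d + 1) → ℕ) : ℝ :=
  ∫ z : E (2 * d + 1), (f j z).re * (∏ k, (P (τexp p j) (α k)).eval (z k)) *
    (gaussER (2 * d + 1) p j z) ^ (p j - 1)

/-- `⟨Im f_j, P_α^{(τ_j)} g_j^{p_j-1}⟩` on `ℝ^{2d+1}`. -/
def pairImE (d : ℕ) (p : Fin 3 → ℝ) (P : ℝ → ℕ → Polynomial ℝ)
    (f : Fin 3 → E (2 * d + 1) → ℂ) (j : Fin 3) (α : Fin (2 * d + 1) → ℕ) : ℝ :=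
  ∫ z : E (2 * d + 1), (f j z).im * (∏ k, (P (τexp p j) (α k)).eval (z k)) *
    (gaussER (2 * d + 1) p j z) ^ (p j - 1)

/-- The orthogonality conditions of the sharpened Young inequality, on `ℝ^{2d+1}`. -/
def OrthCondsE (d : ℕ) (p : Fin 3 → ℝ) (P : ℝ → ℕ → Polynomial ℝ)
    (f : Fin 3 → E (2 * d + 1) → ℂ) : Prop :=
  (∀ j, pairReE d p P f j 0 = 0 ∧ pairImE d p P f j 0 = 0) ∧
  (∀ α : Fin (2 * d + 1) → ℕ, (∑ k, α k) = 1 →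
      pairReE d p P f 0 α = 0 ∧ pairReE d p P f 1 α = 0 ∧ pairImE d p P f 2 α = 0) ∧
  (∀ α : Fin (2 * d + 1) → ℕ, (∑ k, α k) = 2 → pairReE d p P f 2 α = 0)

/-- The `k`-th coordinate of a point of `ℝ^{2d} × ℝ`, viewed as a point of `ℝ^{2d+1}`. -/
def coordH (d : ℕ) (z : H d) (k : Fin (2 * d + 1)) : ℝ :=
  if h : (k : ℕ) < 2 * d then z.1 ⟨k, h⟩ else z.2

/-- `⟨Re f_j, P_α^{(τ_j)} g_j^{p_j-1}⟩` on `ℝ^{2d} × ℝ ≅ ℝ^{2d+1}`. -/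
def pairReH (d : ℕ) (p : Fin 3 → ℝ) (P : ℝ → ℕ → Polynomial ℝ)
    (f : Fin 3 → H d → ℂ) (j : Fin 3) (α : Fin (2 * d + 1) → ℕ) : ℝ :=
  ∫ z : H d, (f j z).re * (∏ k, (P (τexp p j) (α k)).eval (coordH d z k)) *
    (gaussHR d p j z) ^ (p j - 1)

/-- `⟨Im f_j, P_α^{(τ_j)} g_j^{p_j-1}⟩` on `ℝ^{2d} × ℝ ≅ ℝ^{2d+1}`. -/
def pairImH (d : ℕ) (p : Fin 3 → ℝ) (P : ℝ → ℕ → Polynomial ℝ)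
    (f : Fin 3 → H d → ℂ) (j : Fin 3) (α : Fin (2 * d + 1) → ℕ) : ℝ :=
  ∫ z : H d, (f j z).im * (∏ k, (P (τexp p j) (α k)).eval (coordH d z k)) *
    (gaussHR d p j z) ^ (p j - 1)

/-- The orthogonality conditions, on `ℝ^{2d} × ℝ ≅ ℝ^{2d+1}`. -/
def OrthCondsH (d : ℕ) (p : Fin 3 → ℝ) (P : ℝ → ℕ → Polynomial ℝ)
    (f : Fin 3 → H d → ℂ) : Prop :=
  (∀ j, pairReH d p P f j 0 = 0 ∧ pairImH d p P f j 0 = 0) ∧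
  (∀ α : Fin (2 * d + 1) → ℕ, (∑ k, α k) = 1 →
      pairReH d p P f 0 α = 0 ∧ pairReH d p P f 1 α = 0 ∧ pairImH d p P f 2 α = 0) ∧
  (∀ α : Fin (2 * d + 1) → ℕ, (∑ k, α k) = 2 → pairReH d p P f 2 α = 0)

/-!
The shear `t ↦ t + σ(Ax₁, Ax₂)` moves the Gaussian `g₃` by at most `γ₃ |σ| |2t + σ|`, and
`|σ(Ax₁, Ax₂)| ≤ M |x₁| |x₂|` with `M = ‖AᵀJA‖`; for `M ≤ 1` this is at most `γ₃ M w(z₁) w(z₂)` with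
the weight `w(x, t) = |x| (2|t| + |x| + 1)`, so `|T'| ≤ γ₃ M ∏ⱼ ∫ |f_{j,♯}| w`. Since
`|f_{j,♯}| ≤ |η| g_j`, Hölder's inequality for `|f_♯| w = |f_♯|^{3/4} · (|f_♯|^{1/4} w)` bounds
`∫ |f_{j,♯}| w` by `C ‖f_j‖^{3/4}`, with the Gaussian absorbing the weight. The total degree
`1 + 3/4 + 3/4 > 2` leaves room: `M a^{3/4} b^{3/4} ≤ √δ (a² + b² + M²)` when `a, b ≤ δ`.
-/

lemma abs_exp_neg_sub_exp_neg_le {a b : ℝ} (ha : 0 ≤ a) (hb : 0 ≤ b) :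
    |Real.exp (-a) - Real.exp (-b)| ≤ |a - b| := by
  wlog hba : b ≤ a generalizing a b
  · rw [abs_sub_comm, abs_sub_comm a b]
    exact this hb ha (le_of_not_ge hba)
  have hexp : Real.exp (-a) = Real.exp (-b) * Real.exp (b - a) := by
    rw [← Real.exp_add]; ring_nf
  have hlin := Real.add_one_le_exp (b - a)
  have hb1 : Real.exp (-b) ≤ 1 := Real.exp_le_one_iff.2 (by linarith)
  have hab1 : Real.exp (b - a) ≤ 1 := Real.exp_le_one_iff.2 (by linarith)
  rw [abs_of_nonpos (by nlinarith [Real.exp_pos (-b)]), abs_of_nonneg (by linarith)]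
  nlinarith [Real.exp_pos (-b)]

section Gaussian

variable {V W : Type*} [NormedAddCommGroup V] [InnerProductSpace ℝ V] [FiniteDimensional ℝ V]
  [MeasurableSpace V] [BorelSpace V] [NormedAddCommGroup W] [InnerProductSpace ℝ W]
  [FiniteDimensional ℝ W] [MeasurableSpace W] [BorelSpace W]

lemma integrable_exp_mul_norm_sub_mul_sq_norm (a : ℝ) {c : ℝ} (hc : 0 < c) :
    Integrable (fun x : V => Real.exp (a * ‖x‖ - c * ‖x‖ ^ 2)) := by
  have hgauss : Integrable (fun x : V => Real.exp (-(c / 2) * ‖x‖ ^ 2)) := by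
    have h := (GaussianFourier.integrable_cexp_neg_mul_sq_norm_add (V := V)
      (b := ((c / 2 : ℝ) : ℂ)) (by simpa using hc) 0 0).norm
    refine h.congr (Eventually.of_forall fun x => ?_)
    dsimp only
    rw [Complex.norm_exp]
    norm_cast
    simp
  refine (hgauss.const_mul (Real.exp (a ^ 2 / (2 * c)))).mono'
    (by fun_prop) (Eventually.of_forall fun x => ?_)
  -- completing the square: `a r - c r² ≤ a²/(2c) - (c/2) r²`
  rw [Real.norm_of_nonneg (Real.exp_pos _).le, ← Real.exp_add, Real.exp_le_exp,
    div_add' _ _ _ (by positivity), le_div_iff₀ (by positivity)]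
  nlinarith [sq_nonneg (a - c * ‖x‖)]

lemma integrable_exp_mul_norm_add_mul_norm_sub_mul_sq_norm (a b : ℝ) {c : ℝ} (hc : 0 < c) :
    Integrable (fun z : V × W =>
      Real.exp (a * ‖z.1‖ + b * ‖z.2‖ - c * (‖z.1‖ ^ 2 + ‖z.2‖ ^ 2))) := by
  have h := (integrable_exp_mul_norm_sub_mul_sq_norm (V := V) a hc).mul_prod
    (integrable_exp_mul_norm_sub_mul_sq_norm (V := W) b hc)
  rw [← Measure.volume_eq_prod] at h
  refine h.congr (Eventually.of_forall fun z => ?_)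
  simp only [← Real.exp_add]
  ring_nf

end Gaussian

lemma norm_integral_integral_le_of_norm_le_mul {α β F : Type*} [MeasurableSpace α]
    [MeasurableSpace β] {μ : Measure α} {ν : Measure β} [NormedAddCommGroup F]
    [NormedSpace ℝ F] {K : α → β → F} {u : α → ℝ} {v : β → ℝ}
    (hu : Integrable u μ) (hv : Integrable v ν) (hK : ∀ a b, ‖K a b‖ ≤ u a * v b) :
    ‖∫ a, ∫ b, K a b ∂ν ∂μ‖ ≤ (∫ a, u a ∂μ) * ∫ b, v b ∂ν := by
  have hinner : ∀ a, ‖∫ b, K a b ∂ν‖ ≤ u a * ∫ b, v b ∂ν := fun a => by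
    rw [← integral_const_mul]
    exact norm_integral_le_of_norm_le (hv.const_mul _) (Eventually.of_forall (hK a))
  rw [← integral_mul_const]
  exact norm_integral_le_of_norm_le (hu.mul_const _) (Eventually.of_forall hinner)

lemma Lnorm_nonneg {α : Type*} [MeasureSpace α] (q : ℝ) (f : α → ℂ) : 0 ≤ Lnorm q f :=
  Real.rpow_nonneg (integral_nonneg fun _ => Real.rpow_nonneg (norm_nonneg _) _) _

lemma rpow_integral_rpow_le_of_le {α : Type*} [MeasureSpace α] {r : ℝ} (hr : 0 < r)
    {u v : α → ℝ} (hu : ∀ z, 0 ≤ u z) (huv : ∀ z, u z ≤ v z)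
    (hv : MemLp v (ENNReal.ofReal r) volume) :
    (∫ z, u z ^ r) ^ (1 / r) ≤ (∫ z, v z ^ r) ^ (1 / r) := by
  refine Real.rpow_le_rpow (integral_nonneg fun z => Real.rpow_nonneg (hu z) _) ?_
    (by positivity)
  refine integral_mono_of_nonneg (Eventually.of_forall fun z => Real.rpow_nonneg (hu z) _)
    ?_ (Eventually.of_forall fun z => Real.rpow_le_rpow (hu z) (huv z) hr.le)
  refine (hv.integrable_norm_rpow (by simpa using hr) ENNReal.ofReal_ne_top).congr
    (Eventually.of_forall fun z => ?_)
  simp only [ENNReal.toReal_ofReal hr.le, Real.norm_of_nonneg ((hu z).trans (huv z))]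

lemma integral_norm_mul_le_Lnorm_rpow {α : Type*} [MeasureSpace α] {p r : ℝ}
    (hpr : (4 * p / 3).HolderConjugate r) {f F : α → ℂ} {w v : α → ℝ}
    (hf : MemLp f (ENNReal.ofReal p) volume) (hF : AEStronglyMeasurable F volume)
    (hw : AEStronglyMeasurable w volume) (hw0 : ∀ z, 0 ≤ w z)
    (hFf : ∀ z, ‖F z‖ ≤ ‖f z‖) (hFv : ∀ z, ‖F z‖ ^ (1 / 4 : ℝ) * w z ≤ v z)
    (hv : MemLp v (ENNReal.ofReal r) volume) :
    Integrable (fun z => ‖F z‖ * w z) ∧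
      ∫ z, ‖F z‖ * w z ≤ (∫ z, v z ^ r) ^ (1 / r) * Lnorm p f ^ (3 / 4 : ℝ) := by
  have hp : 0 < p := by linarith [hpr.lt]
  set U : α → ℝ := fun z => ‖F z‖ ^ (3 / 4 : ℝ)
  set G : α → ℝ := fun z => ‖F z‖ ^ (1 / 4 : ℝ) * w z
  have hUG : (fun z => ‖F z‖ * w z) = U * G := funext fun z => by
    simp only [U, G, Pi.mul_apply, ← mul_assoc, ← Real.rpow_add' (norm_nonneg _)
      (by norm_num : (3 / 4 : ℝ) + 1 / 4 ≠ 0)]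
    norm_num
  have hG0 : ∀ z, 0 ≤ G z := fun z => mul_nonneg (by positivity) (hw0 z)
  have hUf : ∀ z, U z ≤ ‖f z‖ ^ (3 / 4 : ℝ) := fun z =>
    Real.rpow_le_rpow (norm_nonneg _) (hFf z) (by norm_num)
  have hrpow : ∀ {g : α → ℂ}, MemLp g (ENNReal.ofReal p) volume →
      MemLp (fun z => ‖g z‖ ^ (3 / 4 : ℝ)) (ENNReal.ofReal (4 * p / 3)) volume := fun hg => by
    have h := hg.norm_rpow_div (ENNReal.ofReal (3 / 4))
    rwa [ENNReal.toReal_ofReal (by norm_num), ← ENNReal.ofReal_div_of_pos (by norm_num),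
      show p / (3 / 4) = 4 * p / 3 by ring] at h
  have hU : MemLp U (ENNReal.ofReal (4 * p / 3)) volume :=
    hrpow (hf.of_le hF (Eventually.of_forall fun z => by simpa using hFf z))
  have hG : MemLp G (ENNReal.ofReal r) volume :=
    hv.of_le ((hF.norm.aemeasurable.pow_const _).aestronglyMeasurable.mul hw)
      (Eventually.of_forall fun z => by
        rw [Real.norm_of_nonneg (hG0 z), Real.norm_of_nonneg ((hG0 z).trans (hFv z))]
        exact hFv z)
  refine ⟨hUG ▸ (haveI := hpr.ennrealOfReal; hU.integrable_mul hG), ?_⟩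
  have hLnorm : (∫ z, (‖f z‖ ^ (3 / 4 : ℝ)) ^ (4 * p / 3)) ^ (1 / (4 * p / 3))
      = Lnorm p f ^ (3 / 4 : ℝ) := by
    simp only [← Real.rpow_mul (norm_nonneg _), show 3 / 4 * (4 * p / 3) = p by ring]
    rw [Lnorm, ← Real.rpow_mul (integral_nonneg fun _ => by positivity)]
    congr 1
    field_simp
  calc ∫ z, ‖F z‖ * w z = ∫ z, U z * G z := by rw [hUG]; rfl
    _ ≤ (∫ z, U z ^ (4 * p / 3)) ^ (1 / (4 * p / 3)) * (∫ z, G z ^ r) ^ (1 / r) :=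
        integral_mul_le_Lp_mul_Lq_of_nonneg hpr (Eventually.of_forall fun _ => by positivity)
          (Eventually.of_forall hG0) hU hG
    _ ≤ Lnorm p f ^ (3 / 4 : ℝ) * (∫ z, v z ^ r) ^ (1 / r) := by
        rw [← hLnorm]
        exact mul_le_mul (rpow_integral_rpow_le_of_le hpr.pos (fun _ => by positivity) hUf
          (hrpow hf)) (rpow_integral_rpow_le_of_le hpr.symm.pos hG0 hFv hv)
          (Real.rpow_nonneg (integral_nonneg fun z => Real.rpow_nonneg (hG0 z) _) _)
          (Real.rpow_nonneg (integral_nonneg fun _ => by positivity) _)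
    _ = (∫ z, v z ^ r) ^ (1 / r) * Lnorm p f ^ (3 / 4 : ℝ) := mul_comm _ _

section Sharp

variable {α : Type*} {η : ℝ} {g : α → ℝ} {f : α → ℂ}

lemma norm_fSharp_le_norm (z : α) : ‖fSharp η g f z‖ ≤ ‖f z‖ := by
  unfold fSharp
  split_ifs <;> simp

lemma norm_fSharp_le (hg : ∀ z, 0 ≤ g z) (z : α) : ‖fSharp η g f z‖ ≤ |η| * g z := by
  unfold fSharp
  split_ifs with h
  · exact h.trans (mul_le_mul_of_nonneg_right (le_abs_self η) (hg z))
  · simpa using mul_nonneg (abs_nonneg η) (hg z)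

lemma aestronglyMeasurable_fSharp [MeasurableSpace α] {μ : Measure α} [TopologicalSpace α]
    [OpensMeasurableSpace α] (hg : Continuous g) (hf : AEStronglyMeasurable f μ) :
    AEStronglyMeasurable (fSharp η g f) μ := by
  obtain ⟨f', hf', hff'⟩ := hf
  classical
  refine ⟨fun z => if ‖f' z‖ ≤ η * g z then f' z else 0,
    hf'.ite (measurableSet_le hf'.norm.measurable (hg.measurable.const_mul η))
      stronglyMeasurable_const, ?_⟩
  filter_upwards [hff'] with z hz
  simp [fSharp, hz]

end Sharp

lemma mapp_mapp {n : ℕ} (M N : Matrix (Fin n) (Fin n) ℝ) (x : E n) :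
    mapp M (mapp N x) = mapp (M * N) x := by
  simp [mapp, Matrix.toLpLin_apply, Matrix.mulVec_mulVec]

lemma norm_mapp_le {n : ℕ} (M : Matrix (Fin n) (Fin n) ℝ) (x : E n) :
    ‖mapp M x‖ ≤ opNorm M * ‖x‖ :=
  (LinearMap.toContinuousLinearMap (Matrix.toEuclideanLin M)).le_opNorm x

lemma inner_mapp {n : ℕ} (M : Matrix (Fin n) (Fin n) ℝ) (x y : E n) :
    ⟪mapp M x, y⟫_ℝ = ⟪x, mapp Mᵀ y⟫_ℝ := by
  rw [← Matrix.conjTranspose_eq_transpose_of_trivial]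
  simp only [mapp, Matrix.toEuclideanLin_conjTranspose_eq_adjoint,
    LinearMap.adjoint_inner_right]

lemma mapp_Jmat_apply_of_lt {d : ℕ} (y : E (2 * d)) (i : ℕ) (hi : i < d) :
    mapp (Jmat d) y ⟨i, by omega⟩ = y ⟨i + d, by omega⟩ := by
  show ∑ k, Jmat d _ k * y k = _
  rw [Fintype.sum_eq_single ⟨i + d, by omega⟩ fun k hk => ?_]
  · simp [Jmat, hi]
  · have hk' : (k : ℕ) ≠ i + d := fun h => hk (Fin.ext h)
    simp [Jmat, hk']
    omega

lemma mapp_Jmat_apply_add {d : ℕ} (y : E (2 * d)) (i : ℕ) (hi : i < d) :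
    mapp (Jmat d) y ⟨i + d, by omega⟩ = -y ⟨i, by omega⟩ := by
  show ∑ k, Jmat d _ k * y k = _
  rw [Fintype.sum_eq_single ⟨i, by omega⟩ fun k hk => ?_]
  · simp [Jmat]
  · have hk' : (k : ℕ) ≠ i := fun h => hk (Fin.ext h)
    simp [Jmat]
    omega

lemma symp_eq_inner (d : ℕ) (x y : E (2 * d)) : symp d x y = ⟪x, mapp (Jmat d) y⟫_ℝ := by
  rw [PiLp.inner_apply, ← (finCongr (two_mul d).symm).sum_comp, Fin.sum_univ_add, symp,
    Finset.sum_sub_distrib, sub_eq_add_neg, ← Finset.sum_neg_distrib]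
  congr 1 <;> refine Finset.sum_congr rfl fun j _ => ?_
  · rw [show finCongr (two_mul d).symm (Fin.castAdd d j) = ⟨j, by omega⟩ from rfl,
      mapp_Jmat_apply_of_lt y j j.2]
    simp [mul_comm]
  · rw [show finCongr (two_mul d).symm (Fin.natAdd d j) = ⟨j + d, by omega⟩ from
      Fin.ext (add_comm _ _), mapp_Jmat_apply_add y j j.2]
    simp [mul_comm]

lemma abs_symp_mapp_le (d : ℕ) (A : Matrix (Fin (2 * d)) (Fin (2 * d)) ℝ) (x y : E (2 * d)) :
    |symp d (mapp A x) (mapp A y)| ≤ opNorm (Aᵀ * Jmat d * A) * (‖x‖ * ‖y‖) := by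
  rw [symp_eq_inner, inner_mapp, mapp_mapp, mapp_mapp]
  calc |⟪x, mapp (Aᵀ * Jmat d * A) y⟫_ℝ| ≤ ‖x‖ * ‖mapp (Aᵀ * Jmat d * A) y‖ :=
        abs_real_inner_le_norm _ _
    _ ≤ ‖x‖ * (opNorm (Aᵀ * Jmat d * A) * ‖y‖) := by gcongr; exact norm_mapp_le _ _
    _ = opNorm (Aᵀ * Jmat d * A) * (‖x‖ * ‖y‖) := by ring

def shearWeight (d : ℕ) (z : H d) : ℝ := ‖z.1‖ * (2 * ‖z.2‖ + ‖z.1‖ + 1)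

lemma shearWeight_nonneg (d : ℕ) (z : H d) : 0 ≤ shearWeight d z := by
  unfold shearWeight; positivity

lemma continuous_shearWeight (d : ℕ) : Continuous (shearWeight d) := by
  unfold shearWeight; fun_prop

lemma shearWeight_le_exp (d : ℕ) (z : H d) :
    shearWeight d z ≤ 2 * Real.exp (2 * ‖z.1‖ + ‖z.2‖) := by
  have hx := Real.add_one_le_exp ‖z.1‖
  have ht := Real.add_one_le_exp ‖z.2‖
  have hx0 := norm_nonneg z.1
  have ht0 := norm_nonneg z.2
  calc shearWeight d z ≤ 2 * ((‖z.1‖ + 1) * (‖z.1‖ + 1) * (‖z.2‖ + 1)) := by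
        unfold shearWeight; nlinarith [mul_nonneg hx0 ht0, mul_nonneg (mul_nonneg hx0 hx0) ht0]
    _ ≤ 2 * (Real.exp ‖z.1‖ * Real.exp ‖z.1‖ * Real.exp ‖z.2‖) := by gcongr
    _ = 2 * Real.exp (2 * ‖z.1‖ + ‖z.2‖) := by
        rw [show 2 * ‖z.1‖ + ‖z.2‖ = ‖z.1‖ + ‖z.1‖ + ‖z.2‖ by ring, Real.exp_add, Real.exp_add]

section Kernel

variable {d : ℕ} {p : Fin 3 → ℝ} {j : Fin 3}

lemma abs_gaussHR_sub_le (hγ : 0 ≤ γexp p j) (x : E (2 * d)) (t s : ℝ) :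
    |gaussHR d p j (x, -(t + s)) - gaussHR d p j (x, -t)| ≤ γexp p j * (|s| * |2 * t + s|) := by
  refine (abs_exp_neg_sub_exp_neg_le (by positivity) (by positivity)).trans_eq ?_
  rw [← mul_sub, show ‖x‖ ^ 2 + (-(t + s)) ^ 2 - (‖x‖ ^ 2 + (-t) ^ 2) = s * (2 * t + s) by ring,
    abs_mul, abs_of_nonneg hγ, abs_mul]

lemma norm_gaussH_shear_sub_le (hγ : 0 ≤ γexp p j) {A : Matrix (Fin (2 * d)) (Fin (2 * d)) ℝ}
    (hA : opNorm (Aᵀ * Jmat d * A) ≤ 1) (z₁ z₂ : H d) :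
    ‖gaussH d p j (-(z₁.1 + z₂.1), -(z₁.2 + z₂.2 + symp d (mapp A z₁.1) (mapp A z₂.1)))
        - gaussH d p j (-(z₁.1 + z₂.1), -(z₁.2 + z₂.2))‖
      ≤ γexp p j * opNorm (Aᵀ * Jmat d * A) * (shearWeight d z₁ * shearWeight d z₂) := by
  set M := opNorm (Aᵀ * Jmat d * A)
  set s := symp d (mapp A z₁.1) (mapp A z₂.1)
  have hM0 : 0 ≤ M := norm_nonneg _
  have hx := mul_nonneg (norm_nonneg z₁.1) (norm_nonneg z₂.1)
  have hsM : |s| ≤ M * (‖z₁.1‖ * ‖z₂.1‖) := abs_symp_mapp_le d A z₁.1 z₂.1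
  have hs : |s| ≤ ‖z₁.1‖ * ‖z₂.1‖ := by nlinarith
  have hlin : |2 * (z₁.2 + z₂.2) + s| ≤ 2 * ‖z₁.2‖ + 2 * ‖z₂.2‖ + ‖z₁.1‖ * ‖z₂.1‖ := by
    refine (abs_add_le _ _).trans ?_
    rw [abs_mul, abs_two, Real.norm_eq_abs, Real.norm_eq_abs]
    linarith [abs_add_le z₁.2 z₂.2]
  have hweight : (‖z₁.1‖ * ‖z₂.1‖) * (2 * ‖z₁.2‖ + 2 * ‖z₂.2‖ + ‖z₁.1‖ * ‖z₂.1‖)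
      ≤ shearWeight d z₁ * shearWeight d z₂ := by
    unfold shearWeight
    have := norm_nonneg z₁.2; have := norm_nonneg z₂.2
    nlinarith [mul_nonneg hx (mul_nonneg (norm_nonneg z₁.2) (norm_nonneg z₂.2)),
      mul_nonneg hx (mul_nonneg (norm_nonneg z₁.1) (norm_nonneg z₂.2)),
      mul_nonneg hx (mul_nonneg (norm_nonneg z₂.1) (norm_nonneg z₁.2)),
      mul_nonneg hx hx, mul_nonneg hx (norm_nonneg z₁.1), mul_nonneg hx (norm_nonneg z₂.1)]
  rw [gaussH, gaussH, ← Complex.ofReal_sub, Complex.norm_real, Real.norm_eq_abs]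
  calc _ ≤ γexp p j * (|s| * |2 * (z₁.2 + z₂.2) + s|) := abs_gaussHR_sub_le hγ _ _ _
    _ ≤ γexp p j * (M * (‖z₁.1‖ * ‖z₂.1‖) * (2 * ‖z₁.2‖ + 2 * ‖z₂.2‖ + ‖z₁.1‖ * ‖z₂.1‖)) := by
        gcongr
    _ ≤ γexp p j * M * (shearWeight d z₁ * shearWeight d z₂) := by
        rw [mul_assoc M, ← mul_assoc]; gcongr

lemma norm_T'op_le (hγ : 0 ≤ γexp p 2) {A : Matrix (Fin (2 * d)) (Fin (2 * d)) ℝ}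
    (hA : opNorm (Aᵀ * Jmat d * A) ≤ 1) {F₁ F₂ : H d → ℂ}
    (h₁ : Integrable fun z => ‖F₁ z‖ * shearWeight d z)
    (h₂ : Integrable fun z => ‖F₂ z‖ * shearWeight d z) :
    ‖T'op d A ![F₁, F₂, gaussH d p 2]‖ ≤ γexp p 2 * opNorm (Aᵀ * Jmat d * A) *
      ((∫ z, ‖F₁ z‖ * shearWeight d z) * ∫ z, ‖F₂ z‖ * shearWeight d z) := by
  simp only [T'op, Matrix.cons_val_zero, Matrix.cons_val_one, Matrix.cons_val_two,
    Matrix.tail_cons, Matrix.head_cons]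
  rw [← mul_assoc, ← integral_const_mul (γexp p 2 * opNorm (Aᵀ * Jmat d * A))]
  refine norm_integral_integral_le_of_norm_le_mul (F := ℂ) (h₁.const_mul _) h₂ fun z₁ z₂ => ?_
  rw [norm_mul, norm_mul]
  have := norm_gaussH_shear_sub_le hγ hA z₁ z₂
  calc ‖F₁ z₁‖ * ‖F₂ z₂‖ * ‖_‖ ≤ ‖F₁ z₁‖ * ‖F₂ z₂‖ *
        (γexp p 2 * opNorm (Aᵀ * Jmat d * A) * (shearWeight d z₁ * shearWeight d z₂)) := by
        gcongr
    _ = _ := by ring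

end Kernel

lemma γexp_pos {p : Fin 3 → ℝ} {j : Fin 3} (hpj : 1 < p j) : 0 < γexp p j :=
  mul_pos Real.pi_pos (div_pos (by linarith) (by linarith))

lemma continuous_gaussHR (d : ℕ) (p : Fin 3 → ℝ) (j : Fin 3) : Continuous (gaussHR d p j) := by
  unfold gaussHR; fun_prop

lemma exists_integral_norm_fSharp_mul_shearWeight_le (d : ℕ) {p : Fin 3 → ℝ} {j : Fin 3}
    (hpj : 1 < p j) (η : ℝ) :
    ∃ C, 0 ≤ C ∧ ∀ f : H d → ℂ, MemLp f (ENNReal.ofReal (p j)) volume →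
      Integrable (fun z => ‖fSharp η (gaussHR d p j) f z‖ * shearWeight d z) ∧
      ∫ z, ‖fSharp η (gaussHR d p j) f z‖ * shearWeight d z ≤ C * Lnorm (p j) f ^ (3 / 4 : ℝ) := by
  set γ := γexp p j
  have hγ : 0 < γ := γexp_pos hpj
  set r := Real.conjExponent (4 * p j / 3)
  have hpr : (4 * p j / 3).HolderConjugate r := .conjExponent (by linarith)
  have hr : 0 < r := hpr.symm.pos
  set c := 2 * |η| ^ (1 / 4 : ℝ)
  -- majorant of `‖f♯‖^{1/4} w`, using `‖f♯‖ ≤ |η| g`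
  set v : H d → ℝ := fun z => c * Real.exp (2 * ‖z.1‖ + 1 * ‖z.2‖ - γ / 4 * (‖z.1‖ ^ 2 + ‖z.2‖ ^ 2))
  have hv0 : ∀ z, 0 ≤ v z := fun z => by positivity
  have hv : MemLp v (ENNReal.ofReal r) volume := by
    rw [← integrable_norm_rpow_iff (by fun_prop) (by simpa using hr) ENNReal.ofReal_ne_top]
    refine ((integrable_exp_mul_norm_add_mul_norm_sub_mul_sq_norm (2 * r) r
      (by positivity : 0 < r * (γ / 4))).const_mul (c ^ r)).congr
      (Eventually.of_forall fun z => ?_)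
    simp only [ENNReal.toReal_ofReal hr.le, Real.norm_of_nonneg (hv0 z), v]
    rw [Real.mul_rpow (by positivity) (Real.exp_pos _).le, ← Real.exp_mul]
    ring_nf
  refine ⟨(∫ z, v z ^ r) ^ (1 / r), by positivity, fun f hf => ?_⟩
  refine integral_norm_mul_le_Lnorm_rpow hpr hf
    (aestronglyMeasurable_fSharp (continuous_gaussHR d p j) hf.1)
    (continuous_shearWeight d).aestronglyMeasurable (shearWeight_nonneg d)
    norm_fSharp_le_norm (fun z => ?_) hv
  have hg : ∀ z, 0 ≤ gaussHR d p j z := fun z => (Real.exp_pos _).le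
  calc ‖fSharp η (gaussHR d p j) f z‖ ^ (1 / 4 : ℝ) * shearWeight d z
      ≤ (|η| * gaussHR d p j z) ^ (1 / 4 : ℝ) * (2 * Real.exp (2 * ‖z.1‖ + ‖z.2‖)) := by
        refine mul_le_mul ?_ (shearWeight_le_exp d z) (shearWeight_nonneg d z)
          (Real.rpow_nonneg (mul_nonneg (abs_nonneg η) (hg z)) _)
        exact Real.rpow_le_rpow (norm_nonneg _) (norm_fSharp_le hg z) (by norm_num)
    _ = v z := by
        rw [Real.mul_rpow (abs_nonneg η) (hg z), gaussHR, ← Real.exp_mul]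
        simp only [v, c, γ, Real.norm_eq_abs, sq_abs]
        rw [mul_mul_mul_comm, ← Real.exp_add]
        ring_nf

lemma mul_rpow_mul_rpow_le_sqrt_mul {a b M δ : ℝ} (ha : 0 ≤ a) (hb : 0 ≤ b) (hM : 0 ≤ M)
    (haδ : a ≤ δ) (hbδ : b ≤ δ) :
    M * (a ^ (3 / 4 : ℝ) * b ^ (3 / 4 : ℝ)) ≤ √δ * (a ^ 2 + b ^ 2 + M ^ 2) := by
  have hab := mul_nonneg ha hb
  have hsplit : a ^ (3 / 4 : ℝ) * b ^ (3 / 4 : ℝ) = (a * b) ^ (1 / 4 : ℝ) * √(a * b) := by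
    rw [← Real.mul_rpow ha hb, Real.sqrt_eq_rpow, ← Real.rpow_add' hab (by norm_num)]
    norm_num
  have hquarter : (a * b) ^ (1 / 4 : ℝ) ≤ √δ := by
    calc (a * b) ^ (1 / 4 : ℝ) ≤ (δ ^ 2) ^ (1 / 4 : ℝ) := by
          gcongr; nlinarith
      _ = √δ := by
          rw [Real.sqrt_eq_rpow, ← Real.rpow_natCast, ← Real.rpow_mul (ha.trans haδ)]
          norm_num
  have hAMGM : M * √(a * b) ≤ a ^ 2 + b ^ 2 + M ^ 2 := by
    nlinarith [Real.sq_sqrt hab, Real.sqrt_nonneg (a * b), sq_nonneg (M - √(a * b)),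
      sq_nonneg (a - b)]
  rw [hsplit]
  calc M * ((a * b) ^ (1 / 4 : ℝ) * √(a * b)) = (a * b) ^ (1 / 4 : ℝ) * (M * √(a * b)) := by
        ring
    _ ≤ √δ * (a ^ 2 + b ^ 2 + M ^ 2) := by gcongr

lemma exists_norm_T'op_fSharp_le (d : ℕ) {p : Fin 3 → ℝ} (hp : IsAdmissible p) (η : ℝ) :
    ∃ C, 0 ≤ C ∧ ∀ f₁ f₂ : H d → ℂ, MemLp f₁ (ENNReal.ofReal (p 0)) volume →
      MemLp f₂ (ENNReal.ofReal (p 1)) volume →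
      ∀ A : Matrix (Fin (2 * d)) (Fin (2 * d)) ℝ, opNorm (Aᵀ * Jmat d * A) ≤ 1 →
        ‖T'op d A ![fSharp η (gaussHR d p 0) f₁, fSharp η (gaussHR d p 1) f₂, gaussH d p 2]‖ ≤
          C * (opNorm (Aᵀ * Jmat d * A) *
            (Lnorm (p 0) f₁ ^ (3 / 4 : ℝ) * Lnorm (p 1) f₂ ^ (3 / 4 : ℝ))) := by
  obtain ⟨C₁, hC₁, hK₁⟩ := exists_integral_norm_fSharp_mul_shearWeight_le d (hp.1 0) η
  obtain ⟨C₂, hC₂, hK₂⟩ := exists_integral_norm_fSharp_mul_shearWeight_le d (hp.1 1) η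
  have hγ : 0 < γexp p 2 := γexp_pos (hp.1 2)
  refine ⟨γexp p 2 * C₁ * C₂, by positivity, fun f₁ f₂ hf₁ hf₂ A hA => ?_⟩
  obtain ⟨hint₁, hle₁⟩ := hK₁ f₁ hf₁
  obtain ⟨hint₂, hle₂⟩ := hK₂ f₂ hf₂
  calc _ ≤ γexp p 2 * opNorm (Aᵀ * Jmat d * A) *
        ((∫ z, ‖fSharp η (gaussHR d p 0) f₁ z‖ * shearWeight d z) *
          ∫ z, ‖fSharp η (gaussHR d p 1) f₂ z‖ * shearWeight d z) :=
        norm_T'op_le hγ.le hA hint₁ hint₂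
    _ ≤ γexp p 2 * opNorm (Aᵀ * Jmat d * A) *
        ((C₁ * Lnorm (p 0) f₁ ^ (3 / 4 : ℝ)) * (C₂ * Lnorm (p 1) f₂ ^ (3 / 4 : ℝ))) := by
        refine mul_le_mul_of_nonneg_left (mul_le_mul hle₁ hle₂ ?_
          (mul_nonneg hC₁ (Real.rpow_nonneg (Lnorm_nonneg _ _) _)))
          (mul_nonneg hγ.le (norm_nonneg _))
        exact integral_nonneg fun z => mul_nonneg (norm_nonneg _) (shearWeight_nonneg d z)
    _ = _ := by ring

theorem statement10_general (d : ℕ) (p : Fin 3 → ℝ) (hp : IsAdmissible p)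
    (η : ℝ) :
    ∀ ε : ℝ, 0 < ε → ∃ δ : ℝ, 0 < δ ∧
      ∀ f1 f2 : H d → ℂ, MemLp f1 (ENNReal.ofReal (p 0)) volume →
        MemLp f2 (ENNReal.ofReal (p 1)) volume →
        Lnorm (p 0) f1 ≤ δ → Lnorm (p 1) f2 ≤ δ →
      ∀ A : Matrix (Fin (2 * d)) (Fin (2 * d)) ℝ, opNorm (Aᵀ * Jmat d * A) ≤ δ →
        ‖T'op d A
            ![fSharp η (gaussHR d p 0) f1, fSharp η (gaussHR d p 1) f2, gaussH d p 2]‖ ≤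
          ε * (Lnorm (p 0) f1 ^ 2 + Lnorm (p 1) f2 ^ 2 + opNorm (Aᵀ * Jmat d * A) ^ 2) := by
  intro ε hε
  obtain ⟨C, hC, hT'⟩ := exists_norm_T'op_fSharp_le d hp η
  set δ := min 1 ((ε / (C + 1)) ^ 2)
  have hCδ : C * √δ ≤ ε := by
    have hδ : √δ ≤ ε / (C + 1) := by
      rw [Real.sqrt_le_left (by positivity)]
      exact min_le_right _ _
    calc C * √δ ≤ (C + 1) * (ε / (C + 1)) := by gcongr; linarith
      _ = ε := mul_div_cancel₀ ε (by linarith)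
  refine ⟨δ, by positivity, fun f₁ f₂ hf₁ hf₂ ha hb A hA => ?_⟩
  calc _ ≤ C * (opNorm (Aᵀ * Jmat d * A) *
        (Lnorm (p 0) f₁ ^ (3 / 4 : ℝ) * Lnorm (p 1) f₂ ^ (3 / 4 : ℝ))) :=
        hT' f₁ f₂ hf₁ hf₂ A (hA.trans (min_le_left _ _))
    _ ≤ C * (√δ * _) := mul_le_mul_of_nonneg_left
        (mul_rpow_mul_rpow_le_sqrt_mul (Lnorm_nonneg _ _) (Lnorm_nonneg _ _) (norm_nonneg _)
          ha hb) hC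
    _ ≤ _ := by rw [← mul_assoc]; gcongr

/-- `T'` with two sharp perturbations. -/
theorem statement10 (d : ℕ) (hd : 1 ≤ d) (p : Fin 3 → ℝ) (hp : IsAdmissible p)
    (η : ℝ) (hη : η ∈ Set.Ioo (0 : ℝ) 1) :
    ∀ ε : ℝ, 0 < ε → ∃ δ : ℝ, 0 < δ ∧
      ∀ f1 f2 : H d → ℂ, MemLp f1 (ENNReal.ofReal (p 0)) volume →
        MemLp f2 (ENNReal.ofReal (p 1)) volume →
        Lnorm (p 0) f1 ≤ δ → Lnorm (p 1) f2 ≤ δ →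
      ∀ A : Matrix (Fin (2 * d)) (Fin (2 * d)) ℝ, opNorm (Aᵀ * Jmat d * A) ≤ δ →
        ‖T'op d A
            ![fSharp η (gaussHR d p 0) f1, fSharp η (gaussHR d p 1) f2, gaussH d p 2]‖ ≤
          ε * (Lnorm (p 0) f1 ^ 2 + Lnorm (p 1) f2 ^ 2 + opNorm (Aᵀ * Jmat d * A) ^ 2) :=
  statement10_general d p hp η

end Stability
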